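/- Suppose that for every L > 1 and every c̄ > 0 there exists a continuous function ρ_{L,c̄} : [0,1]² → [1, 1+c̄] which is not the Jacobian (a.e.) of any L-biLipschitz map [0,1]² → ℝ². Then for every c > 0 there exists a continuous function ρ : [0,1]² → [1, 1+c] which is not the Jacobian (a.e.) of any biLipschitz map [0,1]² → ℝ², of any biLipschitz constant. -/

import Mathlib

open MeasureTheory Set Metric

noncomputable section

abbrev E2 := EuclideanSpace ℝ (Fin 2)

def unitSq : Set E2 := {x : E2 | x 0 ∈ Icc (0:ℝ) 1 ∧ x 1 ∈ Icc (0:ℝ) 1}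

def BiLipschitzOn (L : ℝ) (f : E2 → E2) (s : Set E2) : Prop :=
  ∀ x ∈ s, ∀ y ∈ s, (1 / L) * dist x y ≤ dist (f x) (f y) ∧ dist (f x) (f y) ≤ L * dist x y

def Jac (f : E2 → E2) (s : Set E2) (x : E2) : ℝ := (fderivWithin ℝ f s x).det

/-! ### Auxiliary constructions -/

/-- scale factor of the `k`-th square -/
def rr (k : ℕ) : ℝ := (2:ℝ)⁻¹ ^ k / 8

/-- corner of the `k`-th square -/
def vv (k : ℕ) : E2 := WithLp.toLp 2 (fun _ => 5 * (2:ℝ)⁻¹ ^ k / 8)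

/-- affine map sending the unit square onto the `k`-th square -/
def phik (k : ℕ) (x : E2) : E2 := vv k + rr k • x

/-- inverse of `phik k` -/
def psik (k : ℕ) (y : E2) : E2 := (rr k)⁻¹ • (y - vv k)

/-- the `k`-th square -/
def Ik (k : ℕ) : Set E2 := phik k '' unitSq

/-- continuous cutoff: 1 on `Ik k`, vanishing at distance `rr k` from it -/
def lamk (k : ℕ) (x : E2) : ℝ := max 0 (1 - (rr k)⁻¹ * Metric.infDist x (Ik k))

lemma rr_pos (k : ℕ) : 0 < rr k := by
  unfold rr; positivity

lemma rr_ne (k : ℕ) : rr k ≠ 0 := (rr_pos k).ne'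

lemma q_le_one (k : ℕ) : (2:ℝ)⁻¹ ^ k ≤ 1 :=
  pow_le_one₀ (by norm_num) (by norm_num)

lemma psik_phik (k : ℕ) (x : E2) : psik k (phik k x) = x := by
  simp [psik, phik, add_sub_cancel_left, smul_smul, inv_mul_cancel₀ (rr_ne k)]

lemma phik_psik (k : ℕ) (y : E2) : phik k (psik k y) = y := by
  simp [psik, phik, smul_smul, mul_inv_cancel₀ (rr_ne k)]

lemma vv_apply (k : ℕ) (i : Fin 2) : vv k i = 5 * (2:ℝ)⁻¹ ^ k / 8 := rfl

lemma phik_apply (k : ℕ) (x : E2) (i : Fin 2) :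
    phik k x i = 5 * (2:ℝ)⁻¹ ^ k / 8 + rr k * x i := by
  simp [phik, vv_apply]

lemma dist_phik (k : ℕ) (x y : E2) : dist (phik k x) (phik k y) = rr k * dist x y := by
  simp only [phik, dist_add_left, dist_smul₀, Real.norm_eq_abs, abs_of_pos (rr_pos k)]

lemma dist_psik (k : ℕ) (x y : E2) : dist (psik k x) (psik k y) = (rr k)⁻¹ * dist x y := by
  simp only [psik, dist_smul₀, dist_sub_right, Real.norm_eq_abs,
    abs_of_pos (inv_pos.2 (rr_pos k))]

lemma abs_coord_le_dist (x y : E2) (i : Fin 2) : |x i - y i| ≤ dist x y := by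
  rw [EuclideanSpace.dist_eq]
  have h1 : |x i - y i| = Real.sqrt ((x i - y i) ^ 2) := by
    rw [Real.sqrt_sq_eq_abs]
  rw [h1]
  apply Real.sqrt_le_sqrt
  have : dist (x i) (y i) ^ 2 = (x i - y i) ^ 2 := by
    rw [Real.dist_eq, sq_abs]
  rw [← this]
  exact Finset.single_le_sum (f := fun j => dist (x j) (y j) ^ 2)
    (fun j _ => sq_nonneg _) (Finset.mem_univ i)

lemma mem_Ik_iff {k : ℕ} {y : E2} : y ∈ Ik k ↔ psik k y ∈ unitSq := by
  constructor
  · rintro ⟨x, hx, rfl⟩; rwa [psik_phik]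
  · intro h; exact ⟨psik k y, h, phik_psik k y⟩

lemma Ik_coord {k : ℕ} {y : E2} (hy : y ∈ Ik k) (i : Fin 2) :
    y i ∈ Icc (5 * (2:ℝ)⁻¹ ^ k / 8) (6 * (2:ℝ)⁻¹ ^ k / 8) := by
  obtain ⟨x, hx, rfl⟩ := hy
  have hxi : x i ∈ Icc (0:ℝ) 1 := by
    fin_cases i
    exacts [hx.1, hx.2]
  rw [phik_apply]
  have h1 := hxi.1
  have h2 := hxi.2
  have hr := rr_pos k
  constructor
  · nlinarith
  · have : rr k * x i ≤ rr k * 1 := by nlinarith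
    simp only [rr] at this ⊢
    nlinarith

lemma Ik_subset (k : ℕ) : Ik k ⊆ unitSq := by
  intro y hy
  have hq := q_le_one k
  have hqpos : (0:ℝ) < (2:ℝ)⁻¹ ^ k := by positivity
  constructor
  · have := Ik_coord hy 0
    constructor
    · nlinarith [this.1]
    · nlinarith [this.2]
  · have := Ik_coord hy 1
    constructor
    · nlinarith [this.1]
    · nlinarith [this.2]

lemma zero_mem_unitSq : (0 : E2) ∈ unitSq := by
  constructor <;> simp

lemma Ik_nonempty (k : ℕ) : (Ik k).Nonempty := ⟨phik k 0, 0, zero_mem_unitSq, rfl⟩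

lemma lamk_nonneg (k : ℕ) (x : E2) : 0 ≤ lamk k x := le_max_left _ _

lemma lamk_le_one (k : ℕ) (x : E2) : lamk k x ≤ 1 := by
  apply max_le (by norm_num)
  have h1 : 0 ≤ (rr k)⁻¹ * Metric.infDist x (Ik k) :=
    mul_nonneg (inv_pos.2 (rr_pos k)).le Metric.infDist_nonneg
  linarith

lemma continuous_lamk (k : ℕ) : Continuous (lamk k) :=
  continuous_const.max (continuous_const.sub
    (continuous_const.mul (Metric.continuous_infDist_pt _)))

lemma lamk_eq_one {k : ℕ} {x : E2} (hx : x ∈ Ik k) : lamk k x = 1 := by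
  rw [lamk, Metric.infDist_zero_of_mem hx]
  norm_num

lemma lamk_coord {k : ℕ} {x : E2} (hx : lamk k x ≠ 0) :
    x 0 ∈ Ioo ((2:ℝ)⁻¹ ^ k / 2) (7 * (2:ℝ)⁻¹ ^ k / 8) := by
  have hlt : Metric.infDist x (Ik k) < rr k := by
    by_contra h
    push_neg at h
    have : (rr k)⁻¹ * Metric.infDist x (Ik k) ≥ 1 := by
      rw [ge_iff_le, ← inv_mul_cancel₀ (rr_ne k)]
      exact mul_le_mul_of_nonneg_left h (inv_pos.2 (rr_pos k)).le
    apply hx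
    rw [lamk, max_eq_left]
    linarith
  obtain ⟨y, hy, hdy⟩ := (Metric.infDist_lt_iff (Ik_nonempty k)).1 hlt
  have h0 := Ik_coord hy 0
  have habs := (abs_coord_le_dist x y 0).trans_lt hdy
  rw [abs_lt] at habs
  rw [rr] at habs
  constructor
  · have := h0.1; linarith [habs.1]
  · have := h0.2; linarith [habs.2]

lemma lamk_disjoint {j k : ℕ} (hjk : j ≠ k) {x : E2} (hj : lamk j x ≠ 0) :
    lamk k x = 0 := by
  by_contra hk
  have h1 := lamk_coord hj
  have h2 := lamk_coord hk
  have hq : ∀ a b : ℕ, a < b → (7 : ℝ) * (2:ℝ)⁻¹ ^ b / 8 < (2:ℝ)⁻¹ ^ a / 2 := by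
    intro a b hab
    have : (2:ℝ)⁻¹ ^ b ≤ (2:ℝ)⁻¹ ^ (a + 1) :=
      pow_le_pow_of_le_one (by norm_num) (by norm_num) (by omega)
    have hpos : (0:ℝ) < (2:ℝ)⁻¹ ^ a := by positivity
    rw [pow_succ] at this
    nlinarith
  rcases lt_or_gt_of_ne hjk with h | h
  · have := hq j k h
    linarith [h1.1, h2.2]
  · have := hq k j h
    linarith [h2.1, h1.2]

lemma isClosed_unitSq : IsClosed unitSq := by
  have h0 : Continuous fun x : E2 => x 0 := (EuclideanSpace.proj (𝕜 := ℝ) (0 : Fin 2)).continuous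
  have h1 : Continuous fun x : E2 => x 1 := (EuclideanSpace.proj (𝕜 := ℝ) (1 : Fin 2)).continuous
  exact IsClosed.inter (isClosed_Icc.preimage h0) (isClosed_Icc.preimage h1)

lemma measurableSet_unitSq : MeasurableSet unitSq := isClosed_unitSq.measurableSet

/-- the open unit square -/
def intSq : Set E2 := {x : E2 | x 0 ∈ Ioo (0:ℝ) 1 ∧ x 1 ∈ Ioo (0:ℝ) 1}

lemma isOpen_intSq : IsOpen intSq := by
  have h0 : Continuous fun x : E2 => x 0 := (EuclideanSpace.proj (𝕜 := ℝ) (0 : Fin 2)).continuous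
  have h1 : Continuous fun x : E2 => x 1 := (EuclideanSpace.proj (𝕜 := ℝ) (1 : Fin 2)).continuous
  exact IsOpen.inter (isOpen_Ioo.preimage h0) (isOpen_Ioo.preimage h1)

lemma intSq_subset : intSq ⊆ unitSq := fun x hx =>
  ⟨⟨hx.1.1.le, hx.1.2.le⟩, ⟨hx.2.1.le, hx.2.2.le⟩⟩

lemma volume_hyperplane (i : Fin 2) (a : ℝ) : volume {x : E2 | x i = a} = 0 := by
  set K : Submodule ℝ E2 := LinearMap.ker (EuclideanSpace.projₗ (𝕜 := ℝ) i)
  have hK : K ≠ ⊤ := by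
    intro h
    have : EuclideanSpace.single i (1:ℝ) ∈ K := h ▸ Submodule.mem_top
    have h1 : EuclideanSpace.projₗ (𝕜 := ℝ) i (EuclideanSpace.single i (1:ℝ)) = 1 := by
      simp [EuclideanSpace.single_apply]
    rw [LinearMap.mem_ker] at this
    rw [this] at h1
    norm_num at h1
  have hKvol : volume (K : Set E2) = 0 := Measure.addHaar_submodule volume K hK
  have hset : {x : E2 | x i = a} =
      (fun x : E2 => (-(a • EuclideanSpace.single i (1:ℝ))) + x) ⁻¹' (K : Set E2) := by
    ext x
    simp only [mem_setOf_eq, mem_preimage, SetLike.mem_coe, LinearMap.mem_ker, K]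
    have : EuclideanSpace.projₗ (𝕜 := ℝ) i ((-(a • EuclideanSpace.single i (1:ℝ))) + x)
        = -a + x i := by
      simp [EuclideanSpace.single_apply]
    rw [this]
    constructor <;> intro h <;> linarith [h]
  rw [hset, measure_preimage_add]
  exact hKvol

lemma volume_unitSq_diff_intSq : volume (unitSq \ intSq) = 0 := by
  have hsub : unitSq \ intSq ⊆
      {x : E2 | x 0 = 0} ∪ {x : E2 | x 0 = 1} ∪ {x : E2 | x 1 = 0} ∪ {x : E2 | x 1 = 1} := by
    rintro x ⟨⟨h0, h1⟩, hn⟩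
    simp only [intSq, mem_setOf_eq, not_and_or] at hn
    rcases hn with hn | hn
    · rcases eq_or_lt_of_le h0.1 with h | h
      · exact Or.inl (Or.inl (Or.inl h.symm))
      rcases eq_or_lt_of_le h0.2 with h' | h'
      · exact Or.inl (Or.inl (Or.inr h'))
      · exact absurd ⟨h, h'⟩ hn
    · rcases eq_or_lt_of_le h1.1 with h | h
      · exact Or.inl (Or.inr h.symm)
      rcases eq_or_lt_of_le h1.2 with h' | h'
      · exact Or.inr h'
      · exact absurd ⟨h, h'⟩ hn
  refine measure_mono_null hsub ?_
  refine measure_union_null (measure_union_null (measure_union_null ?_ ?_) ?_) ?_ <;>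
    exact volume_hyperplane _ _

lemma phik_mem_intSq {k : ℕ} {x : E2} (hx : x ∈ intSq) : phik k x ∈ intSq := by
  have hq : (0:ℝ) < (2:ℝ)⁻¹ ^ k := by positivity
  have hq1 := q_le_one k
  have hr := rr_pos k
  constructor
  · rw [phik_apply]
    have h := hx.1
    unfold rr
    constructor
    · nlinarith [h.1]
    · nlinarith [h.2]
  · rw [phik_apply]
    have h := hx.2
    unfold rr
    constructor
    · nlinarith [h.1]
    · nlinarith [h.2]

lemma volume_phik_preimage_null {k : ℕ} {N : Set E2} (hN : volume N = 0) :
    volume (phik k ⁻¹' N) = 0 := by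
  have hset : phik k ⁻¹' N = (fun x : E2 => rr k • x) ⁻¹' ((fun y : E2 => vv k + y) ⁻¹' N) := by
    ext x; simp [phik]
  rw [hset]
  rw [Measure.addHaar_preimage_smul volume (rr_ne k)]
  rw [show ((fun y : E2 => vv k + y) ⁻¹' N) = (vv k + ·) ⁻¹' N from rfl]
  rw [measure_preimage_add, hN, mul_zero]

/-- Jacobians transform correctly under the similarity `phik k`. -/
lemma jac_transfer {k : ℕ} (f : E2 → E2) {x : E2} (hx : x ∈ intSq) :
    Jac (fun y => psik k (f (phik k y))) unitSq x = Jac f unitSq (phik k x) := by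
  have hxn : unitSq ∈ nhds x :=
    Filter.mem_of_superset (isOpen_intSq.mem_nhds hx) intSq_subset
  have hφxn : unitSq ∈ nhds (phik k x) :=
    Filter.mem_of_superset (isOpen_intSq.mem_nhds (phik_mem_intSq hx)) intSq_subset
  rw [Jac, Jac, fderivWithin_of_mem_nhds hxn, fderivWithin_of_mem_nhds hφxn]
  set g : E2 → E2 := fun y => psik k (f (phik k y)) with hg
  have hφd : ∀ y : E2, HasFDerivAt (phik k)
      (rr k • (ContinuousLinearMap.id ℝ E2)) y := fun y =>
    ((hasFDerivAt_id y).const_smul (rr k)).const_add (vv k)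
  have hψd : ∀ y : E2, HasFDerivAt (psik k)
      ((rr k)⁻¹ • (ContinuousLinearMap.id ℝ E2)) y := fun y =>
    ((hasFDerivAt_id y).sub_const (vv k)).const_smul (rr k)⁻¹
  by_cases hdf : DifferentiableAt ℝ f (phik k x)
  · have hA := hdf.hasFDerivAt
    have hcomp1 : HasFDerivAt (fun y => f (phik k y))
        ((fderiv ℝ f (phik k x)).comp (rr k • (ContinuousLinearMap.id ℝ E2))) x :=
      hA.comp x (hφd x)
    have hcomp2 : HasFDerivAt g
        (((rr k)⁻¹ • (ContinuousLinearMap.id ℝ E2)).comp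
          ((fderiv ℝ f (phik k x)).comp (rr k • (ContinuousLinearMap.id ℝ E2)))) x :=
      (hψd _).comp x hcomp1
    rw [hcomp2.fderiv]
    show LinearMap.det _ = LinearMap.det _
    rw [ContinuousLinearMap.toLinearMap_comp, ContinuousLinearMap.toLinearMap_comp]
    rw [LinearMap.det_comp, LinearMap.det_comp]
    have h1 : LinearMap.det (((rr k)⁻¹ • ContinuousLinearMap.id ℝ E2 : E2 →L[ℝ] E2)
        : E2 →ₗ[ℝ] E2) = ((rr k)⁻¹) ^ 2 := by
      rw [ContinuousLinearMap.toLinearMap_smul, ContinuousLinearMap.coe_id, LinearMap.det_smul,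
        LinearMap.det_id, finrank_euclideanSpace_fin, mul_one]
    have h2 : LinearMap.det (((rr k) • ContinuousLinearMap.id ℝ E2 : E2 →L[ℝ] E2)
        : E2 →ₗ[ℝ] E2) = (rr k) ^ 2 := by
      rw [ContinuousLinearMap.toLinearMap_smul, ContinuousLinearMap.coe_id, LinearMap.det_smul,
        LinearMap.det_id, finrank_euclideanSpace_fin, mul_one]
    rw [h1, h2]
    rw [mul_comm (((rr k))⁻¹ ^ 2), mul_assoc, ← mul_pow, mul_inv_cancel₀ (rr_ne k),
      one_pow, mul_one]
  · have hdg : ¬ DifferentiableAt ℝ g x := by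
      intro h
      apply hdf
      have hfeq : f = fun y => phik k (g (psik k y)) := by
        funext y
        simp only [hg, phik_psik, psik_phik]
      rw [hfeq]
      have d1 : DifferentiableAt ℝ (psik k) (phik k x) := (hψd _).differentiableAt
      have d2 : DifferentiableAt ℝ g (psik k (phik k x)) := by
        rw [psik_phik]; exact h
      have d3 : DifferentiableAt ℝ (phik k) (g (psik k (phik k x))) :=
        (hφd _).differentiableAt
      exact (d3.comp _ d2).comp _ d1
    rw [fderiv_zero_of_not_differentiableAt hdf, fderiv_zero_of_not_differentiableAt hdg]

theorem stmt_4
    (H : ∀ L > (1:ℝ), ∀ cb > (0:ℝ), ∃ ρ : E2 → ℝ, ContinuousOn ρ unitSq ∧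
      (∀ x ∈ unitSq, ρ x ∈ Icc 1 (1 + cb)) ∧
      ¬ ∃ f : E2 → E2, BiLipschitzOn L f unitSq ∧
        ∀ᵐ x ∂(volume.restrict unitSq), Jac f unitSq x = ρ x) :
    ∀ c > (0:ℝ), ∃ ρ : E2 → ℝ, ContinuousOn ρ unitSq ∧
      (∀ x ∈ unitSq, ρ x ∈ Icc 1 (1 + c)) ∧
      ¬ ∃ (L : ℝ) (f : E2 → E2), 1 ≤ L ∧ BiLipschitzOn L f unitSq ∧
        ∀ᵐ x ∂(volume.restrict unitSq), Jac f unitSq x = ρ x := by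
  intro c hc
  -- the bound values
  set cb : ℕ → ℝ := fun k => min c ((2:ℝ)⁻¹ ^ (k + 1)) with hcb
  have hcbpos : ∀ k, 0 < cb k := fun k => lt_min hc (by positivity)
  have hcble : ∀ k, cb k ≤ (2:ℝ)⁻¹ ^ k := fun k => by
    refine (min_le_right _ _).trans ?_
    exact pow_le_pow_of_le_one (by norm_num) (by norm_num) (by omega)
  have hcblec : ∀ k, cb k ≤ c := fun k => min_le_left _ _
  -- choose the bad densities
  choose ρ0 hcont hmem hbad using fun k : ℕ =>
    H ((k:ℝ) + 2) (by have : (0:ℝ) ≤ (k:ℝ) := Nat.cast_nonneg k; linarith) (cb k) (hcbpos k)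
  -- Tietze extension, clamped
  have hTz : ∀ k : ℕ, ∃ g : E2 → ℝ, Continuous g ∧ ∀ x ∈ unitSq, g x = ρ0 k x := by
    intro k
    obtain ⟨g, hg⟩ := (ContinuousMap.mk _ (hcont k).restrict).exists_restrict_eq
      (Y := ℝ) isClosed_unitSq
    refine ⟨g, g.continuous, fun x hx => ?_⟩
    have := ContinuousMap.congr_fun hg ⟨x, hx⟩
    simpa using this
  choose ext hextc hext using hTz
  set q : ℕ → E2 → ℝ := fun k x => max 1 (min (1 + cb k) (ext k x)) with hqdef
  have hqc : ∀ k, Continuous (q k) := fun k =>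
    continuous_const.max (continuous_const.min (hextc k))
  have hq1 : ∀ k x, 1 ≤ q k x := fun k x => le_max_left _ _
  have hq2 : ∀ k x, q k x ≤ 1 + cb k := fun k x =>
    max_le (by linarith [(hcbpos k).le]) (min_le_left _ _)
  have hqeq : ∀ k, ∀ x ∈ unitSq, q k x = ρ0 k x := by
    intro k x hx
    have h := hmem k x hx
    rw [hqdef]
    simp only
    rw [hext k x hx, min_eq_right h.2, max_eq_right h.1]
  -- the global density
  set u : ℕ → E2 → ℝ := fun k x => lamk k x * (q k (psik k x) - 1) with hu
  have hu_nonneg : ∀ k x, 0 ≤ u k x := fun k x =>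
    mul_nonneg (lamk_nonneg k x) (by linarith [hq1 k (psik k x)])
  have hu_le : ∀ k x, u k x ≤ cb k := by
    intro k x
    have h1 := lamk_le_one k x
    have h2 := lamk_nonneg k x
    have h3 := hq2 k (psik k x)
    have h4 := hq1 k (psik k x)
    calc lamk k x * (q k (psik k x) - 1) ≤ q k (psik k x) - 1 :=
          mul_le_of_le_one_left (by linarith) h1
      _ ≤ cb k := by linarith
  have hu_cont : ∀ k, Continuous (u k) := by
    intro k
    apply (continuous_lamk k).mul
    apply (hqc k).comp ?_ |>.sub continuous_const
    exact (continuous_const (y := (rr k)⁻¹)).smul (continuous_id.sub continuous_const : Continuous fun x : E2 => x - vv k)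
  have hu_bound : ∀ k x, ‖u k x‖ ≤ (2:ℝ)⁻¹ ^ k := by
    intro k x
    rw [Real.norm_eq_abs, abs_of_nonneg (hu_nonneg k x)]
    exact (hu_le k x).trans (hcble k)
  have hsummable : Summable (fun k : ℕ => (2:ℝ)⁻¹ ^ k) :=
    summable_geometric_of_lt_one (by norm_num) (by norm_num)
  set ρ : E2 → ℝ := fun x => 1 + ∑' k, u k x with hρ
  have hρcont : Continuous ρ :=
    continuous_const.add (continuous_tsum hu_cont hsummable hu_bound)
  have hsum_x : ∀ x : E2, Summable (fun k => u k x) :=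
    fun x => hsummable.of_nonneg_of_le (fun k => hu_nonneg k x) (fun k => (hu_le k x).trans (hcble k))
  -- at each point at most one term is nonzero
  have hsingle : ∀ (x : E2) (k : ℕ), lamk k x ≠ 0 → ∑' j, u j x = u k x := by
    intro x k hk
    apply tsum_eq_single
    intro j hj
    rcases eq_or_ne (lamk j x) 0 with h | h
    · simp [hu, h]
    · exact absurd (lamk_disjoint hj h) hk
  have hρmem : ∀ x ∈ unitSq, ρ x ∈ Icc 1 (1 + c) := by
    intro x _
    constructor
    · have : 0 ≤ ∑' k, u k x := tsum_nonneg (fun k => hu_nonneg k x)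
      simp only [hρ]; linarith
    · simp only [hρ]
      have : ∑' k, u k x ≤ c := by
        by_cases hex : ∃ k, lamk k x ≠ 0
        · obtain ⟨k, hk⟩ := hex
          rw [hsingle x k hk]
          exact (hu_le k x).trans (hcblec k)
        · push_neg at hex
          have : ∀ j, u j x = 0 := fun j => by simp [hu, hex j]
          rw [tsum_congr this, tsum_zero]
          exact hc.le
      linarith
  -- ρ restricted to the k-th square is ρ0 k
  have hρφ : ∀ k : ℕ, ∀ x ∈ unitSq, ρ (phik k x) = ρ0 k x := by
    intro k x hx
    have hmem' : phik k x ∈ Ik k := ⟨x, hx, rfl⟩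
    have hlam : lamk k (phik k x) = 1 := lamk_eq_one hmem'
    simp only [hρ]
    rw [hsingle (phik k x) k (by rw [hlam]; norm_num)]
    simp only [hu]
    rw [hlam, psik_phik, hqeq k x hx]
    ring
  refine ⟨ρ, hρcont.continuousOn, hρmem, ?_⟩
  rintro ⟨L, f, hL, hbiL, hae⟩
  -- pick an index beating L
  set k : ℕ := ⌈L⌉₊ with hk
  have hLk : L ≤ (k:ℝ) + 2 := (Nat.le_ceil L).trans (by rw [← hk]; linarith)
  set g : E2 → E2 := fun x => psik k (f (phik k x)) with hgdef
  -- g is (k+2)-biLipschitz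
  have hgbil : BiLipschitzOn ((k:ℝ) + 2) g unitSq := by
    intro x hx y hy
    have hφx : phik k x ∈ unitSq := Ik_subset k ⟨x, hx, rfl⟩
    have hφy : phik k y ∈ unitSq := Ik_subset k ⟨y, hy, rfl⟩
    obtain ⟨hlo, hhi⟩ := hbiL _ hφx _ hφy
    rw [dist_phik] at hlo hhi
    have hdg : dist (g x) (g y) = (rr k)⁻¹ * dist (f (phik k x)) (f (phik k y)) := dist_psik k _ _
    have hr := rr_pos k
    have hd : (0:ℝ) ≤ dist x y := dist_nonneg
    have hLpos : (0:ℝ) < L := by linarith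
    have hk2 : (0:ℝ) < (k:ℝ) + 2 := by positivity
    constructor
    · rw [hdg]
      have h1 : 1 / ((k:ℝ) + 2) * dist x y ≤ 1 / L * dist x y := by
        apply mul_le_mul_of_nonneg_right _ hd
        apply div_le_div_of_nonneg_left (by norm_num) hLpos hLk
      refine h1.trans ?_
      rw [le_inv_mul_iff₀ hr]
      calc rr k * (1 / L * dist x y) = 1 / L * (rr k * dist x y) := by ring
        _ ≤ dist (f (phik k x)) (f (phik k y)) := hlo
    · rw [hdg]
      rw [inv_mul_le_iff₀ hr]
      calc dist (f (phik k x)) (f (phik k y)) ≤ L * (rr k * dist x y) := hhi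
        _ ≤ ((k:ℝ) + 2) * (rr k * dist x y) :=
            mul_le_mul_of_nonneg_right hLk (mul_nonneg hr.le hd)
        _ = rr k * (((k:ℝ) + 2) * dist x y) := by ring
  -- g has a.e. Jacobian ρ0 k
  apply hbad k
  refine ⟨g, hgbil, ?_⟩
  rw [ae_restrict_iff' measurableSet_unitSq] at hae ⊢
  rw [Filter.eventually_iff, mem_ae_iff] at hae ⊢
  set N : Set E2 := {y : E2 | y ∈ unitSq → Jac f unitSq y = ρ y}ᶜ with hN
  have hNnull : volume N = 0 := hae
  have hsub : {x : E2 | x ∈ unitSq → Jac g unitSq x = ρ0 k x}ᶜ ⊆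
      (unitSq \ intSq) ∪ (phik k ⁻¹' N) := by
    intro x hx
    simp only [mem_compl_iff, mem_setOf_eq, Classical.not_imp] at hx
    obtain ⟨hxu, hxne⟩ := hx
    by_cases hxi : x ∈ intSq
    · right
      rw [mem_preimage]
      by_contra hnot
      apply hxne
      rw [hN, mem_compl_iff, not_not, mem_setOf_eq] at hnot
      have hφu : phik k x ∈ unitSq := intSq_subset (phik_mem_intSq hxi)
      calc Jac g unitSq x = Jac f unitSq (phik k x) := jac_transfer f hxi
        _ = ρ (phik k x) := hnot hφu
        _ = ρ0 k x := hρφ k x hxu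
    · exact Or.inl ⟨hxu, hxi⟩
  refine measure_mono_null hsub ?_
  exact measure_union_null volume_unitSq_diff_intSq (volume_phik_preimage_null hNnull)
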